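/- Let q₀ ∈ (0, 1/2] and δ ≥ 0, and define the Cactus approximate solution γ̂ = q₀ + √(2·δ·q₀·(1 − q₀)). If γ̂ ≤ 1/2 (equivalently, if δ ≤ (1/2 − q₀)²/(2·q₀·(1 − q₀))), then γ̂·log(γ̂/q₀) + (1 − γ̂)·log((1 − γ̂)/(1 − q₀)) ≤ δ; that is, the approximate solution satisfies the KL-divergence constraint Φ(γ̂) ≤ δ. -/

import Mathlib

/-!
Let `Q(t) = (t - q)² / (2q(1 - q))` be the quadratic approximation of `Φ(t)` at `q`.
Both `Q` and `Φ` vanish at `q` together with their first derivatives, and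
`Φ''(t) = 1 / (t(1 - t)) ≤ 1 / (q(1 - q)) = Q''(t)` as long as `t` stays in `[q, 1 - q]`.
Integrating this comparison twice gives `Φ ≤ Q` on `[q, 1 - q]`; the Cactus solution lies there
and satisfies `Q(γ̂) = δ`.
-/

open Real Set

noncomputable def binaryKL (q t : ℝ) : ℝ :=
  t * log (t / q) + (1 - t) * log ((1 - t) / (1 - q))

noncomputable def logOddsRatio (q t : ℝ) : ℝ :=
  log (t / q) - log ((1 - t) / (1 - q))

lemma binaryKL_self (q : ℝ) : binaryKL q q = 0 := by
  simp [binaryKL]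

lemma logOddsRatio_self (q : ℝ) : logOddsRatio q q = 0 := by
  simp [logOddsRatio]

lemma le_of_hasDerivAt_le_of_le {f g f' g' : ℝ → ℝ} {a b x : ℝ}
    (hf : ∀ y ∈ Icc a b, HasDerivAt f (f' y) y) (hg : ∀ y ∈ Icc a b, HasDerivAt g (g' y) y)
    (hderiv : ∀ y ∈ Ioo a b, f' y ≤ g' y) (ha : f a ≤ g a) (hx : x ∈ Icc a b) :
    f x ≤ g x := by
  have hmono : MonotoneOn (fun y => g y - f y) (Icc a b) := by
    refine monotoneOn_of_hasDerivWithinAt_nonneg (f' := fun y => g' y - f' y) (convex_Icc a b)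
      (fun y hy => ((hg y hy).sub (hf y hy)).continuousAt.continuousWithinAt) ?_ ?_
    all_goals rw [interior_Icc]; intro y hy
    · exact ((hg y (Ioo_subset_Icc_self hy)).sub (hf y (Ioo_subset_Icc_self hy))).hasDerivWithinAt
    · exact sub_nonneg.2 (hderiv y hy)
  have := hmono (left_mem_Icc.2 (hx.1.trans hx.2)) hx hx.1
  linarith

section

variable {q t : ℝ}

lemma hasDerivAt_log_div_const (hq : q ≠ 0) (ht : t ≠ 0) :
    HasDerivAt (fun s => log (s / q)) (1 / t) t := by
  convert ((hasDerivAt_id' t).div_const q).log (div_ne_zero ht hq) using 1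
  field_simp

lemma hasDerivAt_log_one_sub_div_one_sub (hq : q ≠ 1) (ht : t ≠ 1) :
    HasDerivAt (fun s => log ((1 - s) / (1 - q))) (-(1 / (1 - t))) t := by
  have hq₁ : 1 - q ≠ 0 := sub_ne_zero.2 hq.symm
  have ht₁ : 1 - t ≠ 0 := sub_ne_zero.2 ht.symm
  convert (((hasDerivAt_id' t).const_sub 1).div_const (1 - q)).log (div_ne_zero ht₁ hq₁) using 1
  field_simp

lemma hasDerivAt_logOddsRatio (hq₀ : q ≠ 0) (hq₁ : q ≠ 1) (ht₀ : t ≠ 0) (ht₁ : t ≠ 1) :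
    HasDerivAt (logOddsRatio q) (1 / (t * (1 - t))) t := by
  refine ((hasDerivAt_log_div_const hq₀ ht₀).sub
    (hasDerivAt_log_one_sub_div_one_sub hq₁ ht₁)).congr_deriv ?_
  field_simp [sub_ne_zero.2 ht₁.symm]
  ring

lemma hasDerivAt_binaryKL (hq₀ : q ≠ 0) (hq₁ : q ≠ 1) (ht₀ : t ≠ 0) (ht₁ : t ≠ 1) :
    HasDerivAt (binaryKL q) (logOddsRatio q t) t := by
  refine (((hasDerivAt_id' t).mul (hasDerivAt_log_div_const hq₀ ht₀)).add
    (((hasDerivAt_id' t).const_sub 1).mul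
      (hasDerivAt_log_one_sub_div_one_sub hq₁ ht₁))).congr_deriv ?_
  field_simp [sub_ne_zero.2 ht₁.symm]
  simp only [logOddsRatio]
  ring

lemma Icc_self_one_sub_subset_Ioo (hq : 0 < q) : Icc q (1 - q) ⊆ Ioo 0 1 :=
  fun _ ht => ⟨hq.trans_le ht.1, by linarith [ht.2]⟩

lemma logOddsRatio_le (hq : 0 < q) (ht : t ∈ Icc q (1 - q)) :
    logOddsRatio q t ≤ (t - q) / (q * (1 - q)) := by
  have hq₁ : 0 < 1 - q := by linarith [ht.1, ht.2]
  have hIoo := Icc_self_one_sub_subset_Ioo hq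
  refine le_of_hasDerivAt_le_of_le (g := fun s => (s - q) / (q * (1 - q)))
    (g' := fun _ => 1 / (q * (1 - q)))
    (fun s hs => hasDerivAt_logOddsRatio hq.ne' (sub_pos.1 hq₁).ne (hIoo hs).1.ne' (hIoo hs).2.ne)
    (fun s _ => ((hasDerivAt_id' s).sub_const q).div_const _ |>.congr_deriv (by simp))
    (fun s hs => ?_) (by simp [logOddsRatio_self]) ht
  -- `s (1 - s) - q (1 - q) = (s - q) (1 - q - s)`
  exact one_div_le_one_div_of_le (mul_pos hq hq₁) (by nlinarith [hs.1, hs.2])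

lemma binaryKL_le (hq : 0 < q) (ht : t ∈ Icc q (1 - q)) :
    binaryKL q t ≤ (t - q) ^ 2 / (2 * q * (1 - q)) := by
  have hq₁ : q < 1 := by linarith [ht.1, ht.2]
  have hIoo := Icc_self_one_sub_subset_Ioo hq
  refine le_of_hasDerivAt_le_of_le (g := fun s => (s - q) ^ 2 / (2 * q * (1 - q)))
    (g' := fun s => (s - q) / (q * (1 - q)))
    (fun s hs => hasDerivAt_binaryKL hq.ne' hq₁.ne (hIoo hs).1.ne' (hIoo hs).2.ne)
    (fun s _ => ?_) (fun s hs => logOddsRatio_le hq (Ioo_subset_Icc_self hs))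
    (by simp [binaryKL_self]) ht
  refine ((((hasDerivAt_id' s).sub_const q).pow 2).div_const (2 * q * (1 - q))).congr_deriv ?_
  field_simp
  ring

end

/-- If the Cactus approximate solution `γ̂ = q₀ + √(2 δ q₀ (1 - q₀))` does not
exceed `1/2`, then it satisfies the KL-divergence constraint `Φ(γ̂) ≤ δ`. -/
theorem stmt_15 (q₀ δ : ℝ) (hq₀_pos : 0 < q₀) (hq₀_le : q₀ ≤ 1 / 2) (hδ : 0 ≤ δ)
    (ghat : ℝ) (hghat : ghat = q₀ + Real.sqrt (2 * δ * q₀ * (1 - q₀)))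
    (hle : ghat ≤ 1 / 2) :
    ghat * Real.log (ghat / q₀) + (1 - ghat) * Real.log ((1 - ghat) / (1 - q₀)) ≤ δ := by
  have hq₀_lt : q₀ < 1 := by linarith
  have hmem : ghat ∈ Icc q₀ (1 - q₀) :=
    ⟨by rw [hghat]; exact le_add_of_nonneg_right (sqrt_nonneg _), by linarith⟩
  have hsq : (ghat - q₀) ^ 2 = 2 * δ * q₀ * (1 - q₀) := by
    rw [hghat, add_sub_cancel_left, sq_sqrt (by have := sub_pos.2 hq₀_lt; positivity)]
  calc binaryKL q₀ ghat ≤ (ghat - q₀) ^ 2 / (2 * q₀ * (1 - q₀)) := binaryKL_le hq₀_pos hmem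
    _ = δ := by
      rw [hsq]
      field_simp [hq₀_pos.ne', (sub_pos.2 hq₀_lt).ne']
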